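/- Reconstruction of an element of a formal reproducing kernel Hilbert space from its coefficients: let F be a finite-dimensional complex Hilbert space and let (H, (π_n)_{n ∈ ℤ^d}) be coefficient data of a formal reproducing kernel Hilbert space with coefficient space F, with (π_n) separating. For L ∈ ℕ set Λ_L := {ℓ ∈ ℤ^d : |ℓ| ≤ L}, H_L := ⋂_{ℓ ∈ Λ_L} ker π_ℓ, and let P_L be the orthogonal projection of H onto the orthogonal complement of H_L. Then: (i) the orthogonal complement of H_L equals the linear span of {π_ℓ^* u : ℓ ∈ Λ_L, u ∈ F} (this span is finite-dimensional, hence closed); (ii) for every f ∈ H, ‖P_L f − f‖ → 0 as L → ∞; (iii) for every f ∈ H and every L there exists a family (u_ℓ)_{ℓ ∈ Λ_L} in F such that π_{ℓ'} f = Σ_{ℓ ∈ Λ_L} π_{ℓ'} π_ℓ^* u_ℓ for all ℓ' ∈ Λ_L, and for every such family P_L f = Σ_{ℓ ∈ Λ_L} π_ℓ^* u_ℓ. -/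

import Mathlib

/-! Since `ker π_ℓ = (range π_ℓ*)ᗮ`, the space `H_L` is the orthogonal complement of the span
`K_L` of the ranges of `π_ℓ*`, `ℓ ∈ Λ_L`; this span is finite-dimensional, hence closed, so
`H_Lᗮ = K_L`. Separation makes the increasing union of the `K_L` dense, so the projections onto
`K_L` converge to the identity pointwise. Finally `P_L f = ∑ π_ℓ* u_ℓ` holds iff
`f - ∑ π_ℓ* u_ℓ ∈ K_Lᗮ = H_L`, which is the linear system for `u`; it is solvable because
`P_L f ∈ K_L`. -/

open ContinuousLinearMap Filter

/-- The finite "ball" `{ℓ ∈ ℤ^d : |ℓ₁| + ⋯ + |ℓ_d| ≤ L}`. -/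
noncomputable def intBall (d L : ℕ) : Finset (Fin d → ℤ) :=
  (Finset.Icc (fun _ => -(L : ℤ)) fun _ => (L : ℤ)).filter fun ℓ => ∑ i, |ℓ i| ≤ (L : ℤ)

theorem mem_intBall_iff {d L : ℕ} {ℓ : Fin d → ℤ} : ℓ ∈ intBall d L ↔ ∑ i, |ℓ i| ≤ L := by
  simp only [intBall, Finset.mem_filter, Finset.mem_Icc, and_iff_right_iff_imp]
  intro h
  have hi : ∀ i, |ℓ i| ≤ L := fun i =>
    (Finset.single_le_sum (fun j _ => abs_nonneg (ℓ j)) (Finset.mem_univ i)).trans h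
  exact ⟨fun i => neg_le_of_abs_le (hi i), fun i => le_of_abs_le (hi i)⟩

theorem intBall_mono (d : ℕ) : Monotone (intBall d) := fun _ _ h _ hℓ =>
  mem_intBall_iff.2 ((mem_intBall_iff.1 hℓ).trans (by exact_mod_cast h))

theorem mem_intBall_toNat {d : ℕ} (ℓ : Fin d → ℤ) : ℓ ∈ intBall d (∑ i, |ℓ i|).toNat :=
  mem_intBall_iff.2 (Int.self_le_toNat _)

section SpanOfRanges

variable {ι R M N : Type*} [Ring R] [AddCommGroup M] [Module R M] [AddCommGroup N] [Module R N]
  (B : ι → M →ₗ[R] N) (s : Finset ι)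

theorem span_iUnion_range_eq_biSup_range :
    Submodule.span R (⋃ i ∈ s, Set.range (B i)) = ⨆ i ∈ s, LinearMap.range (B i) := by
  simp only [Submodule.span_iUnion₂, ← LinearMap.coe_range, Submodule.span_eq]

theorem mem_span_iUnion_range_iff_exists_sum {x : N} :
    x ∈ Submodule.span R (⋃ i ∈ s, Set.range (B i)) ↔ ∃ u : ι → M, x = ∑ i ∈ s, B i (u i) := by
  rw [span_iUnion_range_eq_biSup_range, Submodule.mem_iSup_finset_iff_exists_sum]
  constructor
  · rintro ⟨μ, rfl⟩
    choose u hu using fun i => LinearMap.mem_range.1 (μ i).2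
    exact ⟨u, by simp only [hu]⟩
  · rintro ⟨u, rfl⟩
    exact ⟨fun i => ⟨B i (u i), LinearMap.mem_range_self _ _⟩, rfl⟩

instance finite_span_iUnion_range [Module.Finite R M] :
    Module.Finite R (Submodule.span R (⋃ i ∈ s, Set.range (B i))) := by
  rw [span_iUnion_range_eq_biSup_range, ← Finset.sup_eq_iSup]
  exact Submodule.finite_finset_sup _ _

end SpanOfRanges

section AdjointRanges

variable {ι F H : Type*} [NormedAddCommGroup F] [InnerProductSpace ℂ F]
  [NormedAddCommGroup H] [InnerProductSpace ℂ H] [CompleteSpace H] (A : ι → H →L[ℂ] F)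

theorem iInf_ker_eq_orthogonal_span_range_adjoint [CompleteSpace F] (s : Finset ι) :
    ⨅ i ∈ s, LinearMap.ker (A i : H →ₗ[ℂ] F)
      = (Submodule.span ℂ (⋃ i ∈ s, Set.range (adjoint (A i))))ᗮ := by
  change _ = (Submodule.span ℂ (⋃ i ∈ s, Set.range (adjoint (A i) : F →ₗ[ℂ] H)))ᗮ
  rw [span_iUnion_range_eq_biSup_range, ← Submodule.iInf_orthogonal]
  refine iInf_congr fun i => ?_
  by_cases hi : i ∈ s <;> simp [hi, orthogonal_range]

theorem topologicalClosure_iSup_span_range_adjoint_eq_top [CompleteSpace F] {κ : Type*}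
    (s : κ → Finset ι) (hs : ∀ i, ∃ k, i ∈ s k) (hsep : ∀ x, (∀ i, A i x = 0) → x = 0) :
    (⨆ k, Submodule.span ℂ (⋃ i ∈ s k, Set.range (adjoint (A i)))).topologicalClosure = ⊤ := by
  rw [← Submodule.orthogonal_orthogonal_eq_closure, ← Submodule.iInf_orthogonal]
  simp only [← iInf_ker_eq_orthogonal_span_range_adjoint]
  suffices h : ⨅ k, ⨅ i ∈ s k, LinearMap.ker (A i : H →ₗ[ℂ] F) = ⊥ by
    rw [h, Submodule.bot_orthogonal_eq_top]
  refine eq_bot_iff.2 fun x hx => hsep x fun i => ?_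
  obtain ⟨k, hk⟩ := hs i
  simp only [Submodule.mem_iInf, LinearMap.mem_ker, coe_coe] at hx
  exact hx k i hk

variable [FiniteDimensional ℂ F]

instance finiteDimensional_span_range_adjoint (s : Finset ι) :
    FiniteDimensional ℂ (Submodule.span ℂ (⋃ i ∈ s, Set.range (adjoint (A i)))) :=
  finite_span_iUnion_range (fun i => (adjoint (A i) : F →ₗ[ℂ] H)) s

theorem orthogonal_iInf_ker_eq_span_range_adjoint (s : Finset ι) :
    (⨅ i ∈ s, LinearMap.ker (A i : H →ₗ[ℂ] F))ᗮ
      = Submodule.span ℂ (⋃ i ∈ s, Set.range (adjoint (A i))) := by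
  rw [iInf_ker_eq_orthogonal_span_range_adjoint, Submodule.orthogonal_orthogonal]

theorem starProjection_span_range_adjoint_eq_sum_iff (s : Finset ι) (f : H) (u : ι → F) :
    (Submodule.span ℂ (⋃ i ∈ s, Set.range (adjoint (A i)))).starProjection f
        = ∑ i ∈ s, adjoint (A i) (u i) ↔
      ∀ j ∈ s, A j f = ∑ i ∈ s, A j (adjoint (A i) (u i)) := by
  set K := Submodule.span ℂ (⋃ i ∈ s, Set.range (adjoint (A i)))
  have hsum : ∑ i ∈ s, adjoint (A i) (u i) ∈ K :=
    (mem_span_iUnion_range_iff_exists_sum (fun i => (adjoint (A i) : F →ₗ[ℂ] H)) s).2 ⟨u, rfl⟩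
  have hnormal : (∀ j ∈ s, A j f = ∑ i ∈ s, A j (adjoint (A i) (u i)))
      ↔ f - ∑ i ∈ s, adjoint (A i) (u i) ∈ Kᗮ := by
    simp only [K, ← iInf_ker_eq_orthogonal_span_range_adjoint, Submodule.mem_iInf,
      LinearMap.mem_ker, coe_coe, map_sub, map_sum, sub_eq_zero]
  rw [hnormal]
  exact ⟨fun h => h ▸ K.sub_starProjection_mem_orthogonal f,
    K.eq_starProjection_of_mem_orthogonal hsum⟩

end AdjointRanges

theorem frkhs_reconstruction_from_coefficients
    {d : ℕ} {F H : Type*}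
    [NormedAddCommGroup F] [InnerProductSpace ℂ F] [FiniteDimensional ℂ F]
    [NormedAddCommGroup H] [InnerProductSpace ℂ H] [CompleteSpace H]
    (π : (Fin d → ℤ) → H →L[ℂ] F)
    (hsep : ∀ g : H, (∀ n, π n g = 0) → g = 0) :
    (∀ L : ℕ,
      (⨅ ℓ ∈ intBall d L, LinearMap.ker (π ℓ : H →ₗ[ℂ] F))ᗮ
          = Submodule.span ℂ (⋃ ℓ ∈ intBall d L, Set.range (adjoint (π ℓ))) ∧
        FiniteDimensional ℂ
          (Submodule.span ℂ (⋃ ℓ ∈ intBall d L, Set.range (adjoint (π ℓ))))) ∧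
    ∀ f : H, ∃ g : ℕ → H,
      (∀ L, g L ∈ (⨅ ℓ ∈ intBall d L, LinearMap.ker (π ℓ : H →ₗ[ℂ] F))ᗮ ∧
            f - g L ∈ (⨅ ℓ ∈ intBall d L, LinearMap.ker (π ℓ : H →ₗ[ℂ] F))) ∧
      Tendsto (fun L => ‖g L - f‖) atTop (nhds 0) ∧
      ∀ L : ℕ,
        (∃ u : (Fin d → ℤ) → F,
          ∀ ℓ' ∈ intBall d L, π ℓ' f = ∑ ℓ ∈ intBall d L, π ℓ' (adjoint (π ℓ) (u ℓ))) ∧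
        ∀ u : (Fin d → ℤ) → F,
          (∀ ℓ' ∈ intBall d L, π ℓ' f = ∑ ℓ ∈ intBall d L, π ℓ' (adjoint (π ℓ) (u ℓ))) →
          g L = ∑ ℓ ∈ intBall d L, adjoint (π ℓ) (u ℓ) := by
  set K : ℕ → Submodule ℂ H := fun L =>
    Submodule.span ℂ (⋃ ℓ ∈ intBall d L, Set.range (adjoint (π ℓ)))
  have hK_mono : Monotone K := fun _ _ h =>
    Submodule.span_mono (Set.biUnion_subset_biUnion_left (intBall_mono d h))
  have hK_dense := topologicalClosure_iSup_span_range_adjoint_eq_top π (intBall d)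
    (fun ℓ => ⟨_, mem_intBall_toNat ℓ⟩) hsep
  refine ⟨fun L => ⟨orthogonal_iInf_ker_eq_span_range_adjoint π _, inferInstance⟩, fun f =>
    ⟨fun L => (K L).starProjection f, fun L => ⟨?_, ?_⟩, ?_, fun L => ⟨?_, fun u hu => ?_⟩⟩⟩
  · rw [orthogonal_iInf_ker_eq_span_range_adjoint]
    exact (K L).starProjection_apply_mem f
  · rw [iInf_ker_eq_orthogonal_span_range_adjoint]
    exact (K L).sub_starProjection_mem_orthogonal f
  · exact tendsto_iff_norm_sub_tendsto_zero.1
      (Submodule.starProjection_tendsto_self K hK_mono f hK_dense.ge)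
  · obtain ⟨u, hu⟩ := (mem_span_iUnion_range_iff_exists_sum
      (fun ℓ => (adjoint (π ℓ) : F →ₗ[ℂ] H)) (intBall d L)).1 ((K L).starProjection_apply_mem f)
    exact ⟨u, (starProjection_span_range_adjoint_eq_sum_iff π _ f u).1 hu⟩
  · exact (starProjection_span_range_adjoint_eq_sum_iff π _ f u).2 hu
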